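/- arXiv:math/0005064 — 4 statements merged into one kernel-verified Lean document; each statement's English description precedes it below -/
import Mathlib

section
/- For real numbers τ₁, τ₂, τ₃ with τ₁ + τ₂ + τ₃ = 0, and a real number a with |τ₃| ≤ C·⟨a⟩ for some constant C ≥ 1 (where ⟨x⟩ := (1+x²)^{1/2}), one has |τ₂| + |τ₃| ≲ ⟨τ₁⟩^{1/2}·⟨τ₂⟩^{1/2} + ⟨τ₁⟩^{1/2}·⟨a⟩^{1/2} + ⟨τ₂⟩^{1/2}·⟨a⟩^{1/2}, where the implicit constant depends only on C. -/
/-!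
Since `τ₁ + τ₂ + τ₃ = 0`, each of `|τ₂|`, `|τ₃|` is bounded both by its own weight and by the sum
of the other two weights (with `⟨a⟩` standing in for `⟨τ₃⟩`, up to `C`). An elementary
inequality `w ≤ u, w ≤ v ⟹ w ≤ √u √v` then redistributes these bounds into the products of
square roots of weights on the right-hand side.
-/

noncomputable def jb (x : ℝ) : ℝ := Real.sqrt (1 + x ^ 2)

lemma one_le_jb (x : ℝ) : 1 ≤ jb x :=
  Real.one_le_sqrt.mpr (by nlinarith [sq_nonneg x])

lemma jb_nonneg (x : ℝ) : 0 ≤ jb x :=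
  zero_le_one.trans (one_le_jb x)

lemma abs_le_jb (x : ℝ) : |x| ≤ jb x := by
  rw [← Real.sqrt_sq_eq_abs]
  exact Real.sqrt_le_sqrt (by linarith)

lemma Real.sqrt_add_le_add_sqrt {u v : ℝ} (hu : 0 ≤ u) (hv : 0 ≤ v) :
    √(u + v) ≤ √u + √v := by
  rw [Real.sqrt_le_left (by positivity), add_sq, Real.sq_sqrt hu, Real.sq_sqrt hv]
  nlinarith [Real.sqrt_nonneg u, Real.sqrt_nonneg v]

lemma le_mul_sqrt_mul_sqrt {C w u v : ℝ} (hC : 0 ≤ C) (hu : 0 ≤ u) (hv : 0 ≤ v)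
    (hwu : w ≤ C * u) (hwv : w ≤ C * v) : w ≤ C * (√u * √v) := by
  rcases le_or_gt w 0 with hw | hw
  · exact hw.trans (by positivity)
  refine le_of_sq_le_sq ?_ (by positivity)
  rw [mul_pow, mul_pow, Real.sq_sqrt hu, Real.sq_sqrt hv]
  nlinarith

lemma abs_le_mul_sqrt_jb_mul {C x b y z : ℝ} (hC : 0 ≤ C)
    (hb : |x| ≤ C * jb b) (hyz : |x| ≤ C * (jb y + jb z)) :
    |x| ≤ C * (√(jb b) * (√(jb y) + √(jb z))) :=
  calc |x| ≤ C * (√(jb b) * √(jb y + jb z)) :=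
        le_mul_sqrt_mul_sqrt hC (jb_nonneg b) (by linarith [jb_nonneg y, jb_nonneg z]) hb hyz
    _ ≤ C * (√(jb b) * (√(jb y) + √(jb z))) := by
        gcongr
        exact Real.sqrt_add_le_add_sqrt (jb_nonneg y) (jb_nonneg z)

lemma abs_le_abs_add_abs_of_add_add_eq_zero {x y z : ℝ} (h : x + y + z = 0) :
    |x| ≤ |y| + |z| := by
  rw [show x = -(y + z) by linarith, abs_neg]
  exact abs_add_le y z

/-- Weight redistribution inequality (Section 7 of Tao's paper). -/
theorem stmt_0 :
    ∀ C : ℝ, 1 ≤ C → ∃ K > 0, ∀ τ₁ τ₂ τ₃ a : ℝ,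
      τ₁ + τ₂ + τ₃ = 0 → |τ₃| ≤ C * jb a →
      |τ₂| + |τ₃| ≤ K * (jb τ₁ ^ ((1:ℝ)/2) * jb τ₂ ^ ((1:ℝ)/2)
        + jb τ₁ ^ ((1:ℝ)/2) * jb a ^ ((1:ℝ)/2)
        + jb τ₂ ^ ((1:ℝ)/2) * jb a ^ ((1:ℝ)/2)) := by
  intro C hC
  refine ⟨2 * C, by positivity, fun τ₁ τ₂ τ₃ a hsum h₃a => ?_⟩
  simp only [← Real.sqrt_eq_rpow]
  have h₂ : |τ₂| ≤ C * (√(jb τ₂) * (√(jb τ₁) + √(jb a))) := by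
    refine abs_le_mul_sqrt_jb_mul (by positivity) ?_ ?_
    · nlinarith [abs_le_jb τ₂, one_le_jb τ₂]
    · have := abs_le_abs_add_abs_of_add_add_eq_zero (show τ₂ + τ₁ + τ₃ = 0 by linarith)
      nlinarith [abs_le_jb τ₁, one_le_jb τ₁]
  have h₃ : |τ₃| ≤ C * (√(jb a) * (√(jb τ₁) + √(jb τ₂))) := by
    refine abs_le_mul_sqrt_jb_mul (by positivity) h₃a ?_
    have := abs_le_abs_add_abs_of_add_add_eq_zero (show τ₃ + τ₁ + τ₂ = 0 by linarith)
    nlinarith [abs_le_jb τ₁, abs_le_jb τ₂, jb_nonneg τ₁, jb_nonneg τ₂]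
  have : 0 ≤ C * (√(jb τ₁) * √(jb τ₂) + √(jb τ₁) * √(jb a)) := by positivity
  linarith
end

section
/- For vectors ξ₂, ξ₃ ∈ ℝ³ and real numbers τ₂, τ₃ satisfying ||τ₂| - |ξ₂|| ≤ (1/2)·|ξ₂| and ||τ₃| - |ξ₃|| ≤ (1/2)·|ξ₃|, if τ₁ := -(τ₂+τ₃), then |τ₃| ≲ ⟨τ₁⟩^{1/2}·⟨ξ₃⟩^{1/2} + ⟨ξ₂⟩^{1/2}·⟨ξ₃⟩^{1/2}, where ⟨x⟩ := (1+|x|²)^{1/2} and |ξ| denotes the Euclidean norm. -/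
noncomputable def jbv (ξ : EuclideanSpace ℝ (Fin 3)) : ℝ := Real.sqrt (1 + ‖ξ‖ ^ 2)

lemma jbv_nonneg (ξ : EuclideanSpace ℝ (Fin 3)) : 0 ≤ jbv ξ := Real.sqrt_nonneg _

lemma norm_le_jbv (ξ : EuclideanSpace ℝ (Fin 3)) : ‖ξ‖ ≤ jbv ξ := by
  have h := Real.sqrt_le_sqrt (show ‖ξ‖ ^ 2 ≤ 1 + ‖ξ‖ ^ 2 by nlinarith)
  rwa [Real.sqrt_sq (norm_nonneg ξ)] at h

/-- Weight inequality near the light cone (Section 8 of Tao's paper). -/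
theorem stmt_1 :
    ∃ K > 0, ∀ (ξ₂ ξ₃ : EuclideanSpace ℝ (Fin 3)) (τ₂ τ₃ : ℝ),
      |(|τ₂|) - ‖ξ₂‖| ≤ (1/2) * ‖ξ₂‖ →
      |(|τ₃|) - ‖ξ₃‖| ≤ (1/2) * ‖ξ₃‖ →
      |τ₃| ≤ K * (jb (-(τ₂ + τ₃)) ^ ((1:ℝ)/2) * jbv ξ₃ ^ ((1:ℝ)/2)
        + jbv ξ₂ ^ ((1:ℝ)/2) * jbv ξ₃ ^ ((1:ℝ)/2)) := by
  refine ⟨2, by norm_num, fun ξ₂ ξ₃ τ₂ τ₃ h2 h3 => ?_⟩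
  set a := jb (-(τ₂ + τ₃)) with ha
  set b := jbv ξ₂ with hb
  set c := jbv ξ₃ with hc
  have ha0 : 0 ≤ a := jb_nonneg _
  have hb0 : 0 ≤ b := jbv_nonneg _
  have hc0 : 0 ≤ c := jbv_nonneg _
  have h1 : |τ₂ + τ₃| ≤ a := by
    have := abs_le_jb (-(τ₂ + τ₃)); rwa [abs_neg] at this
  have h2' : ‖ξ₂‖ ≤ b := norm_le_jbv _
  have h3' : ‖ξ₃‖ ≤ c := norm_le_jbv _
  -- |τ₃| ≤ (3/2) c
  have habs2 : |(|τ₂|) - ‖ξ₂‖| ≤ (1/2) * ‖ξ₂‖ := h2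
  have habs3 : |(|τ₃|) - ‖ξ₃‖| ≤ (1/2) * ‖ξ₃‖ := h3
  rw [abs_le] at habs2 habs3
  have hτ3c : |τ₃| ≤ (3/2) * c := by
    have : |τ₃| ≤ (3/2) * ‖ξ₃‖ := by linarith [habs3.2]
    linarith
  have hτ3ab : |τ₃| ≤ (3/2) * (a + b) := by
    have h23 : |τ₃| ≤ |τ₂ + τ₃| + |τ₂| := by
      calc |τ₃| = |(τ₂ + τ₃) - τ₂| := by ring_nf
        _ ≤ |τ₂ + τ₃| + |τ₂| := abs_sub _ _
    have hτ2 : |τ₂| ≤ (3/2) * b := by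
      have : |τ₂| ≤ (3/2) * ‖ξ₂‖ := by linarith [habs2.2]
      linarith
    linarith
  -- square
  have hsq : |τ₃| ^ 2 ≤ ((3/2) * Real.sqrt c * Real.sqrt (a + b)) ^ 2 := by
    have hab0 : 0 ≤ a + b := by linarith
    have e1 : Real.sqrt c ^ 2 = c := Real.sq_sqrt hc0
    have e2 : Real.sqrt (a + b) ^ 2 = a + b := Real.sq_sqrt hab0
    have : |τ₃| ^ 2 ≤ (9/4) * (c * (a + b)) := by
      nlinarith [abs_nonneg τ₃]
    calc |τ₃| ^ 2 ≤ (9/4) * (c * (a + b)) := this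
      _ = ((3/2) * Real.sqrt c * Real.sqrt (a + b)) ^ 2 := by ring_nf; rw [e1, e2]; ring
  have hmain : |τ₃| ≤ (3/2) * Real.sqrt c * Real.sqrt (a + b) := by
    have hpos : 0 ≤ (3/2) * Real.sqrt c * Real.sqrt (a + b) := by positivity
    nlinarith [abs_nonneg τ₃]
  have hsplit : Real.sqrt (a + b) ≤ Real.sqrt a + Real.sqrt b := by
    have hle : a + b ≤ (Real.sqrt a + Real.sqrt b) ^ 2 := by
      nlinarith [Real.sq_sqrt ha0, Real.sq_sqrt hb0, Real.sqrt_nonneg a, Real.sqrt_nonneg b]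
    calc Real.sqrt (a + b) ≤ Real.sqrt ((Real.sqrt a + Real.sqrt b) ^ 2) :=
          Real.sqrt_le_sqrt hle
      _ = Real.sqrt a + Real.sqrt b := Real.sqrt_sq (by positivity)
  rw [← Real.sqrt_eq_rpow a, ← Real.sqrt_eq_rpow b, ← Real.sqrt_eq_rpow c]
  have hcnn : 0 ≤ Real.sqrt c := Real.sqrt_nonneg c
  calc |τ₃| ≤ (3/2) * Real.sqrt c * Real.sqrt (a + b) := hmain
    _ ≤ (3/2) * Real.sqrt c * (Real.sqrt a + Real.sqrt b) := by
        apply mul_le_mul_of_nonneg_left hsplit; positivity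
    _ ≤ 2 * (Real.sqrt a * Real.sqrt c + Real.sqrt b * Real.sqrt c) := by
        nlinarith [Real.sqrt_nonneg a, Real.sqrt_nonneg b]
end

section
/- Let s > 3/4 and T ≥ 1. Then for all ξ ∈ ℝ³, the convolution ∫_{ℝ³} χ_{T-1 ≤ |η| ≤ T+1}(η) · ⟨ξ - η⟩^{-(2s+1/2)} dη is bounded by a constant depending only on s (uniformly in T and ξ), where ⟨x⟩ := (1+|x|²)^{1/2}. -/
/-!
Rotating, we may take `ξ = a e₀` with `a = ‖ξ‖`. Lebesgue measure on `ℝ³` pushes forward under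
`η ↦ (η₀, ‖η‖²)` to `π dt dv` on `{t² < v}` (Archimedes), and `‖a e₀ - η‖² = a² + v - 2at`, so
the integral becomes `π ∫_{(T-1)²}^{(T+1)²} ∫_{t² < v} (1 + a² + v - 2at)^(-q) dt dv` with
`q = s + 1/4 > 1`. On the sphere `v = ρ²` the inner integral is at most both
`2ρ / (1 + (a - ρ)²)` and `1 / (2a(q - 1))`; the first is `O(1/T)` when `a < T/2`, the second
when `a ≥ T/2`. The shell has `v`-width `4T`.
-/

open MeasureTheory

open Set Real Function
open scoped ENNReal

theorem integral_comp_norm_norm_sub_eq_of_norm_eq {E : Type*} [NormedAddCommGroup E]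
    [InnerProductSpace ℝ E] [FiniteDimensional ℝ E] [MeasurableSpace E] [BorelSpace E]
    (F : ℝ → ℝ → ℝ) {ξ ξ' : E} (h : ‖ξ‖ = ‖ξ'‖) :
    ∫ η, F ‖η‖ ‖ξ - η‖ = ∫ η, F ‖η‖ ‖ξ' - η‖ := by
  set R := (ℝ ∙ (ξ - ξ'))ᗮ.reflection
  rw [← R.measurePreserving.integral_comp R.toHomeomorph.measurableEmbedding
    (fun η => F ‖η‖ ‖ξ' - η‖)]
  congr 1 with η
  rw [R.norm_map, ← R.norm_map (ξ' - R η), map_sub, Submodule.reflection_reflection,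
    ← Submodule.reflection_sub h, Submodule.reflection_reflection]

theorem EuclideanSpace.norm_single_sub_sq {ι : Type*} [Fintype ι] [DecidableEq ι] (i : ι)
    (a : ℝ) (η : EuclideanSpace ℝ ι) :
    ‖EuclideanSpace.single i a - η‖ ^ 2 = a ^ 2 + ‖η‖ ^ 2 - 2 * a * η i := by
  rw [norm_sub_sq_real, EuclideanSpace.inner_single_left, PiLp.norm_single,
    Real.norm_eq_abs, sq_abs]
  simp only [conj_trivial]
  ring

theorem EuclideanSpace.norm_sq_fin_three (t x y : ℝ) :
    ‖!₂[t, x, y]‖ ^ 2 = t ^ 2 + (x ^ 2 + y ^ 2) := by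
  simp [EuclideanSpace.norm_sq_eq, Fin.sum_univ_three, add_assoc]

theorem lintegral_euclideanSpace_fin_three {G : EuclideanSpace ℝ (Fin 3) → ℝ≥0∞}
    (hG : Measurable G) : ∫⁻ η, G η = ∫⁻ t, ∫⁻ z : ℝ × ℝ, G !₂[t, z.1, z.2] := by
  let e : EuclideanSpace ℝ (Fin 3) ≃ᵐ ℝ × ℝ × ℝ :=
    (MeasurableEquiv.toLp 2 (Fin 3 → ℝ)).symm.trans
      ((MeasurableEquiv.piFinSuccAbove (fun _ => ℝ) 0).trans
        (MeasurableEquiv.prodCongr (MeasurableEquiv.refl ℝ) MeasurableEquiv.finTwoArrow))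
  have he : MeasurePreserving e :=
    (EuclideanSpace.volume_preserving_symm_measurableEquiv_toLp _).trans
      ((volume_preserving_piFinSuccAbove _ 0).trans
        ((MeasurePreserving.id volume).prod (volume_preserving_finTwoArrow ℝ)))
  rw [← he.symm.lintegral_comp_emb e.symm.measurableEmbedding, Measure.volume_eq_prod,
    lintegral_prod (fun p => G (e.symm p)) (hG.comp e.symm.measurable).aemeasurable]
  congr with t
  congr with z
  congr 1
  ext i
  fin_cases i <;> rfl

theorem lintegral_comp_sq_add_sq {h : ℝ → ℝ≥0∞} (hh : Measurable h) :
    ∫⁻ z : ℝ × ℝ, h (z.1 ^ 2 + z.2 ^ 2) = ENNReal.ofReal π * ∫⁻ u in Ioi 0, h u := by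
  have hsq : (fun r : ℝ => r ^ 2) '' Ioi 0 = Ioi 0 := by
    refine Subset.antisymm (image_subset_iff.2 fun r (hr : 0 < r) => pow_pos hr 2) fun u hu => ?_
    exact ⟨√u, sqrt_pos.2 hu, sq_sqrt (le_of_lt hu)⟩
  have hsub : ∫⁻ u in Ioi 0, h u = ∫⁻ r in Ioi 0, ENNReal.ofReal (2 * r) * h (r ^ 2) := by
    conv_lhs => rw [← hsq]
    rw [lintegral_image_eq_lintegral_abs_deriv_mul measurableSet_Ioi
      (fun r _ => (hasDerivAt_pow 2 r).hasDerivWithinAt)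
      ((pow_left_strictMonoOn₀ two_ne_zero).injOn.mono Ioi_subset_Ici_self)]
    refine setLIntegral_congr_fun measurableSet_Ioi fun r hr => ?_
    rw [Nat.cast_ofNat, pow_one, abs_of_pos (mul_pos two_pos hr)]
  rw [← lintegral_comp_polarCoord_symm, polarCoord_target, Measure.volume_eq_prod,
    ← Measure.prod_restrict, lintegral_prod _ (by fun_prop)]
  simp only [polarCoord_symm_apply, mul_pow, ← mul_add, cos_sq_add_sin_sq, mul_one, smul_eq_mul,
    setLIntegral_const, Real.volume_Ioo, hsub]
  rw [← lintegral_const_mul' _ _ ENNReal.ofReal_ne_top]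
  refine setLIntegral_congr_fun measurableSet_Ioi fun r hr => ?_
  rw [show π - -π = 2 * π by ring, ENNReal.ofReal_mul zero_le_two, ENNReal.ofReal_mul zero_le_two]
  ring

theorem lintegral_comp_apply_zero_norm_sq {H : ℝ → ℝ → ℝ≥0∞} (hH : Measurable (uncurry H)) :
    ∫⁻ η : EuclideanSpace ℝ (Fin 3), H (η 0) (‖η‖ ^ 2) =
      ENNReal.ofReal π * ∫⁻ v, ∫⁻ t in {t | t ^ 2 < v}, H t v := by
  set S : Set (ℝ × ℝ) := {p | p.1 ^ 2 < p.2}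
  have hS : MeasurableSet S := measurableSet_lt (by fun_prop) measurable_snd
  have hslice (t : ℝ) : ∫⁻ z : ℝ × ℝ, H t (t ^ 2 + (z.1 ^ 2 + z.2 ^ 2)) =
      ENNReal.ofReal π * ∫⁻ v, S.indicator (uncurry H) (t, v) := by
    have hHt : Measurable fun u => H t (t ^ 2 + u) :=
      hH.comp (f := fun u => (t, t ^ 2 + u)) (by fun_prop)
    rw [lintegral_comp_sq_add_sq hHt, ← lintegral_indicator measurableSet_Ioi,
      ← lintegral_add_left_eq_self (fun v => S.indicator (uncurry H) (t, v)) (t ^ 2)]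
    congr 2 with u
    simp [S, indicator]
  have hG : Measurable fun η : EuclideanSpace ℝ (Fin 3) => H (η 0) (‖η‖ ^ 2) :=
    hH.comp (f := fun η : EuclideanSpace ℝ (Fin 3) => (η 0, ‖η‖ ^ 2)) (by fun_prop)
  rw [lintegral_euclideanSpace_fin_three hG]
  simp only [EuclideanSpace.norm_sq_fin_three, Matrix.cons_val_zero, hslice]
  rw [lintegral_const_mul _ (by fun_prop), lintegral_lintegral_swap
    (f := fun t v => S.indicator (uncurry H) (t, v)) (hH.indicator hS).aemeasurable]
  congr with v
  rw [← lintegral_indicator (measurableSet_lt (by fun_prop) measurable_const)]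
  rfl

theorem lintegral_rpow_neg_sub_mul_le_length {q β κ ρ : ℝ} (hq : 1 ≤ q) (hβ : 0 ≤ β)
    (hκ : 1 ≤ κ - β * ρ) :
    ∫⁻ t in Ioo (-ρ) ρ, ENNReal.ofReal ((κ - β * t) ^ (-q)) ≤
      ENNReal.ofReal (2 * ρ / (κ - β * ρ)) := by
  have hle (t : ℝ) (ht : t ∈ Ioo (-ρ) ρ) : (κ - β * t) ^ (-q) ≤ (κ - β * ρ)⁻¹ := by
    have hρt : κ - β * ρ ≤ κ - β * t := by nlinarith [ht.2]
    calc (κ - β * t) ^ (-q) ≤ (κ - β * t) ^ (-1 : ℝ) :=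
          rpow_le_rpow_of_exponent_le (hκ.trans hρt) (by linarith)
      _ ≤ (κ - β * ρ)⁻¹ := by
          rw [rpow_neg_one]; exact inv_anti₀ (by linarith) hρt
  calc ∫⁻ t in Ioo (-ρ) ρ, ENNReal.ofReal ((κ - β * t) ^ (-q))
      ≤ ∫⁻ _ in Ioo (-ρ) ρ, ENNReal.ofReal (κ - β * ρ)⁻¹ :=
        setLIntegral_mono measurable_const fun t ht => ENNReal.ofReal_le_ofReal (hle t ht)
    _ = ENNReal.ofReal (2 * ρ / (κ - β * ρ)) := by
        rw [setLIntegral_const, Real.volume_Ioo, ← ENNReal.ofReal_mul (by positivity)]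
        ring_nf

theorem lintegral_rpow_neg_sub_mul_le {q β κ ρ : ℝ} (hq : 1 < q) (hβ : 0 < β) (hρ : 0 ≤ ρ)
    (hκ : 1 ≤ κ - β * ρ) :
    ∫⁻ t in Ioo (-ρ) ρ, ENNReal.ofReal ((κ - β * t) ^ (-q)) ≤
      ENNReal.ofReal (1 / (β * (q - 1))) := by
  have hβρ : 0 ≤ β * ρ := mul_nonneg hβ.le hρ
  have hge (t : ℝ) (ht : t ∈ Icc (-ρ) ρ) : 1 ≤ κ - β * t := by nlinarith [ht.2]
  have hcont : ContinuousOn (fun t => (κ - β * t) ^ (-q)) (Icc (-ρ) ρ) :=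
    ContinuousOn.rpow_const (by fun_prop) fun t ht => Or.inl (by linarith [hge t ht])
  rw [← ofReal_integral_eq_lintegral_ofReal
    (hcont.integrableOn_Icc.mono_set Ioo_subset_Icc_self)
    (ae_restrict_of_forall_mem measurableSet_Ioo fun t ht =>
      rpow_nonneg (by linarith [hge t (Ioo_subset_Icc_self ht)]) _)]
  refine ENNReal.ofReal_le_ofReal ?_
  have h0 : (0 : ℝ) ∉ uIcc (κ - β * ρ) (κ - β * -ρ) := fun h => by
    rcases mem_uIcc.1 h with h | h <;> linarith
  rw [← integral_Ioc_eq_integral_Ioo, ← intervalIntegral.integral_of_le (by linarith),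
    intervalIntegral.integral_comp_sub_mul (fun x => x ^ (-q)) hβ.ne',
    integral_rpow (Or.inr ⟨by linarith, h0⟩)]
  have hA : (κ - β * ρ) ^ (-q + 1) ≤ 1 := rpow_le_one_of_one_le_of_nonpos hκ (by linarith)
  have hB : 0 ≤ (κ - β * -ρ) ^ (-q + 1) := rpow_nonneg (by linarith) _
  have hq' : -q + 1 ≠ 0 := by linarith
  have hq'' : q - 1 ≠ 0 := by linarith
  calc β⁻¹ • (((κ - β * -ρ) ^ (-q + 1) - (κ - β * ρ) ^ (-q + 1)) / (-q + 1))
      = ((κ - β * ρ) ^ (-q + 1) - (κ - β * -ρ) ^ (-q + 1)) / (β * (q - 1)) := by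
        rw [smul_eq_mul]; field_simp; ring
    _ ≤ 1 / (β * (q - 1)) := by gcongr; linarith

theorem lintegral_sphere_slice_le {q T a v : ℝ} (hq : 1 < q) (hT : 1 ≤ T) (ha : 0 ≤ a)
    (hv : v ∈ Icc ((T - 1) ^ 2) ((T + 1) ^ 2)) :
    ∫⁻ t in {t | t ^ 2 < v}, ENNReal.ofReal ((1 + a ^ 2 + v - 2 * a * t) ^ (-q)) ≤
      ENNReal.ofReal (max (1 / (q - 1)) 24 / T) := by
  set ρ := √v
  have hv0 : 0 ≤ v := (sq_nonneg _).trans hv.1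
  have hvρ : v = ρ ^ 2 := (sq_sqrt hv0).symm
  have hρ₁ : T - 1 ≤ ρ := by
    simpa only [sqrt_sq (by linarith : 0 ≤ T - 1)] using sqrt_le_sqrt hv.1
  have hρ₂ : ρ ≤ T + 1 := by
    simpa only [sqrt_sq (by linarith : 0 ≤ T + 1)] using sqrt_le_sqrt hv.2
  have hset : {t | t ^ 2 < v} = Ioo (-ρ) ρ := by
    ext t; simp [sq_lt, ρ]
  have hκ : 1 + a ^ 2 + v - 2 * a * ρ = 1 + (a - ρ) ^ 2 := by rw [hvρ]; ring
  have hκ₁ : 1 ≤ 1 + a ^ 2 + v - 2 * a * ρ := by rw [hκ]; nlinarith [sq_nonneg (a - ρ)]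
  have hT0 : 0 < T := by linarith
  rw [hset]
  rcases le_or_gt (T / 2) a with hTa | hTa
  · refine (lintegral_rpow_neg_sub_mul_le hq (by linarith) (sqrt_nonneg v) hκ₁).trans
      (ENNReal.ofReal_le_ofReal ?_)
    calc 1 / (2 * a * (q - 1)) ≤ 1 / (q - 1) / T := by
          rw [div_div, mul_comm (q - 1)]
          gcongr
          linarith
      _ ≤ max (1 / (q - 1)) 24 / T := by gcongr; exact le_max_left _ _
  · refine (lintegral_rpow_neg_sub_mul_le_length hq.le (by linarith) hκ₁).trans
      (ENNReal.ofReal_le_ofReal ?_)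
    calc 2 * ρ / (1 + a ^ 2 + v - 2 * a * ρ) ≤ 24 / T := by
          rw [hκ, div_le_div_iff₀ (by positivity) hT0]
          rcases le_or_gt T 2 with hT2 | hT2
          · nlinarith [sq_nonneg (a - ρ)]
          · -- `ρ - a > T/2 - 1 > 0` and `2T(T + 1) ≤ 24(1 + (T/2 - 1)²)`
            nlinarith [sq_nonneg (T - 4)]
      _ ≤ max (1 / (q - 1)) 24 / T := by gcongr; exact le_max_right _ _

theorem lintegral_shell_le {q T a : ℝ} (hq : 1 < q) (hT : 1 ≤ T) (ha : 0 ≤ a) :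
    ∫⁻ η : EuclideanSpace ℝ (Fin 3), (Icc ((T - 1) ^ 2) ((T + 1) ^ 2)).indicator
        (fun v => ENNReal.ofReal ((1 + a ^ 2 + v - 2 * a * η 0) ^ (-q))) (‖η‖ ^ 2) ≤
      ENNReal.ofReal (4 * π * max (1 / (q - 1)) 24) := by
  set I := Icc ((T - 1) ^ 2) ((T + 1) ^ 2)
  set K := max (1 / (q - 1)) 24
  rw [lintegral_comp_apply_zero_norm_sq
    (H := fun t v => I.indicator (fun v => ENNReal.ofReal ((1 + a ^ 2 + v - 2 * a * t) ^ (-q))) v)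
    (Measurable.indicator
      (f := fun p : ℝ × ℝ => ENNReal.ofReal ((1 + a ^ 2 + p.2 - 2 * a * p.1) ^ (-q))) (by fun_prop)
      (measurable_snd measurableSet_Icc))]
  calc ENNReal.ofReal π * ∫⁻ v, ∫⁻ t in {t | t ^ 2 < v},
        I.indicator (fun v => ENNReal.ofReal ((1 + a ^ 2 + v - 2 * a * t) ^ (-q))) v
      ≤ ENNReal.ofReal π * ∫⁻ v, I.indicator (fun _ => ENNReal.ofReal (K / T)) v := by
        gcongr with v
        by_cases hv : v ∈ I
        · simpa only [indicator_of_mem hv] using lintegral_sphere_slice_le hq hT ha hv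
        · simp [indicator_of_notMem hv]
    _ = ENNReal.ofReal (4 * π * K) := by
        rw [lintegral_indicator_const measurableSet_Icc, Real.volume_Icc,
          ← ENNReal.ofReal_mul (by positivity), ← ENNReal.ofReal_mul pi_pos.le]
        congr 1
        field_simp
        ring

theorem ofReal_shell_indicator_eq {T a p : ℝ} (hT : 1 ≤ T) (η : EuclideanSpace ℝ (Fin 3)) :
    ENNReal.ofReal (if T - 1 ≤ ‖η‖ ∧ ‖η‖ ≤ T + 1 then
        √(1 + ‖EuclideanSpace.single 0 a - η‖ ^ 2) ^ (-p) else 0) =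
      (Icc ((T - 1) ^ 2) ((T + 1) ^ 2)).indicator
        (fun v => ENNReal.ofReal ((1 + a ^ 2 + v - 2 * a * η 0) ^ (-(p / 2)))) (‖η‖ ^ 2) := by
  have hshell : (T - 1 ≤ ‖η‖ ∧ ‖η‖ ≤ T + 1) ↔ ‖η‖ ^ 2 ∈ Icc ((T - 1) ^ 2) ((T + 1) ^ 2) := by
    rw [mem_Icc, sq_le_sq₀ (by linarith) (norm_nonneg η), sq_le_sq₀ (norm_nonneg η) (by linarith)]
  have hkernel : √(1 + ‖EuclideanSpace.single 0 a - η‖ ^ 2) ^ (-p) =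
      (1 + a ^ 2 + ‖η‖ ^ 2 - 2 * a * η 0) ^ (-(p / 2)) := by
    rw [sqrt_eq_rpow, ← rpow_mul (by positivity), EuclideanSpace.norm_single_sub_sq]
    congr 1 <;> ring
  simp only [indicator, hshell, hkernel, apply_ite ENNReal.ofReal, ENNReal.ofReal_zero]

/-- Convolution estimate: χ_{|ξ|=T+O(1)} * ⟨ξ⟩^{-2s-1/2} is bounded uniformly in T, ξ. -/
theorem stmt_5 (s : ℝ) (hs : 3/4 < s) :
    ∃ C > 0, ∀ T : ℝ, 1 ≤ T → ∀ ξ : EuclideanSpace ℝ (Fin 3),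
      (∫ η : EuclideanSpace ℝ (Fin 3),
        (if T - 1 ≤ ‖η‖ ∧ ‖η‖ ≤ T + 1 then jbv (ξ - η) ^ (-(2 * s + 1/2)) else 0))
        ≤ C := by
  have hq : 1 < (2 * s + 1 / 2) / 2 := by linarith
  refine ⟨4 * π * max (1 / ((2 * s + 1 / 2) / 2 - 1)) 24, by positivity, fun T hT ξ => ?_⟩
  have hrot := integral_comp_norm_norm_sub_eq_of_norm_eq
    (fun r d => if T - 1 ≤ r ∧ r ≤ T + 1 then √(1 + d ^ 2) ^ (-(2 * s + 1 / 2)) else 0)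
    (by simp : ‖ξ‖ = ‖EuclideanSpace.single (0 : Fin 3) ‖ξ‖‖)
  simp only [jbv] at hrot ⊢
  rw [hrot, integral_eq_lintegral_of_nonneg_ae (ae_of_all _ fun η => by positivity) ?meas]
  case meas =>
    exact (Measurable.ite ((measurableSet_le measurable_const measurable_norm).inter
      (measurableSet_le measurable_norm measurable_const)) (by fun_prop)
      measurable_const).aestronglyMeasurable
  simp only [ofReal_shell_indicator_eq hT]
  exact ENNReal.toReal_le_of_le_ofReal (by positivity) (lintegral_shell_le hq hT (norm_nonneg ξ))
end

section
/- For functions f, g, h in the Schwartz class on ℝ³ and s > 3/4, one has |∫_{ℝ³} f·g·h dx| ≤ C(s)·‖f‖_{H^{3/4-s}}·‖g‖_{H^{s+1/4}}·‖h‖_{H^{s+1/4}}, where H^σ denotes the inhomogeneous Sobolev space with norm ‖f‖_{H^σ} = ‖⟨ξ⟩^σ f̂‖_{L²}. -/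
open MeasureTheory FourierTransform

noncomputable def sobNorm (σ : ℝ) (f : EuclideanSpace ℝ (Fin 3) → ℂ) : ℝ :=
  (∫ ξ : EuclideanSpace ℝ (Fin 3),
    Real.sqrt (1 + ‖ξ‖ ^ 2) ^ (2 * σ) * ‖𝓕 f ξ‖ ^ 2) ^ ((1:ℝ)/2)

/-!
On the Fourier side `∫ f g h = ∫ f̂(ξ) (ǧ ⋆ ȟ)(ξ) dξ`. Put `t = s - 3/4 ≥ 0`, so that `f` is measured
by `‖⟨ξ⟩^{-t} f̂‖_{L²}` and `g, h` by `‖⟨η⟩^{t+1} ĝ‖_{L²}`. Peetre's inequality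
`⟨ξ⟩^t ≤ 2^{t/2} ⟨η⟩^t ⟨ξ - η⟩^t` absorbs the missing factor `⟨ξ⟩^t` into the other two weights and
leaves the kernel `⟨η⟩⁻¹ ⟨ξ - η⟩⁻¹`. By Cauchy–Schwarz its `L²_η` norm is at most `‖⟨·⟩⁻¹‖²_{L⁴}`
uniformly in `ξ`, which is finite because `⟨·⟩⁻⁴` is integrable in dimension `3 < 4`.
Cauchy–Schwarz in `η`, then in `ξ`, and Tonelli (`∫∫ |b(η) c(ξ - η)|² = ‖b‖² ‖c‖²`) finish.
-/

open scoped ENNReal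
open SchwartzMap Module

section Bracket

variable {E : Type*} [NormedAddCommGroup E]

/-- `⟨ξ⟩ ^ σ` with `⟨ξ⟩ = (1 + ‖ξ‖ ^ 2) ^ (1 / 2)`, as an extended nonnegative real. -/
noncomputable def bracketPow (σ : ℝ) (ξ : E) : ℝ≥0∞ :=
  ENNReal.ofReal ((1 + ‖ξ‖ ^ 2) ^ (σ / 2))

lemma one_add_norm_sq_pos (ξ : E) : 0 < 1 + ‖ξ‖ ^ 2 := by positivity

lemma bracketPow_ne_top (σ : ℝ) (ξ : E) : bracketPow σ ξ ≠ ∞ := ENNReal.ofReal_ne_top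

lemma bracketPow_zero (ξ : E) : bracketPow 0 ξ = 1 := by simp [bracketPow]

lemma bracketPow_add (σ τ : ℝ) (ξ : E) :
    bracketPow (σ + τ) ξ = bracketPow σ ξ * bracketPow τ ξ := by
  rw [bracketPow, bracketPow, bracketPow, ← ENNReal.ofReal_mul (by positivity),
    ← Real.rpow_add (one_add_norm_sq_pos ξ), add_div]

lemma bracketPow_pow (σ : ℝ) (n : ℕ) (ξ : E) :
    bracketPow σ ξ ^ n = bracketPow (n * σ) ξ := by
  rw [bracketPow, bracketPow, ← ENNReal.ofReal_pow (by positivity),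
    ← Real.rpow_mul_natCast (one_add_norm_sq_pos ξ).le]
  ring_nf

@[simp]
lemma bracketPow_neg_apply (σ : ℝ) (ξ : E) : bracketPow σ (-ξ) = bracketPow σ ξ := by
  simp [bracketPow]

@[fun_prop]
lemma continuous_bracketPow (σ : ℝ) : Continuous (bracketPow σ : E → ℝ≥0∞) :=
  ENNReal.continuous_ofReal.comp <| (continuous_const.add (continuous_norm.pow 2)).rpow_const
    fun ξ => Or.inl (one_add_norm_sq_pos ξ).ne'

@[fun_prop]
lemma measurable_bracketPow [MeasurableSpace E] [OpensMeasurableSpace E] (σ : ℝ) :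
    Measurable (bracketPow σ : E → ℝ≥0∞) :=
  (continuous_bracketPow σ).measurable

lemma one_add_norm_add_sq_le (x y : E) :
    1 + ‖x + y‖ ^ 2 ≤ 2 * ((1 + ‖x‖ ^ 2) * (1 + ‖y‖ ^ 2)) := by
  have : ‖x + y‖ ^ 2 ≤ (‖x‖ + ‖y‖) ^ 2 := by gcongr; exact norm_add_le x y
  nlinarith [sq_nonneg (‖x‖ - ‖y‖), sq_nonneg (‖x‖ * ‖y‖)]

/-- Peetre's inequality. -/
lemma bracketPow_add_le {t : ℝ} (ht : 0 ≤ t) (x y : E) :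
    bracketPow t (x + y) ≤ ENNReal.ofReal (2 ^ (t / 2)) * bracketPow t x * bracketPow t y := by
  rw [bracketPow, bracketPow, bracketPow, ← ENNReal.ofReal_mul (by positivity),
    ← ENNReal.ofReal_mul (by positivity), ← Real.mul_rpow (by positivity) (by positivity),
    ← Real.mul_rpow (by positivity) (by positivity), mul_assoc]
  gcongr
  exact one_add_norm_add_sq_le x y

lemma mul_mul_le_bracketPow_weights {t : ℝ} (ht : 0 ≤ t) (ξ η : E) (p q r : ℝ≥0∞) :
    p * (q * r) ≤ ENNReal.ofReal (2 ^ (t / 2)) *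
      (bracketPow (-t) ξ * p * (bracketPow (t + 1) η * q * (bracketPow (t + 1) (ξ - η) * r) *
        (bracketPow (-1) η * bracketPow (-1) (ξ - η)))) := by
  have hPeetre := bracketPow_add_le ht η (ξ - η)
  rw [add_sub_cancel] at hPeetre
  have hcancel : bracketPow t ξ * bracketPow (-t) ξ = 1 := by
    rw [← bracketPow_add, add_neg_cancel, bracketPow_zero]
  have hshift (x : E) : bracketPow (t + 1) x * bracketPow (-1) x = bracketPow t x := by
    rw [← bracketPow_add, add_neg_cancel_right]
  calc p * (q * r) = bracketPow t ξ * bracketPow (-t) ξ * (p * (q * r)) := by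
        rw [hcancel, one_mul]
    _ ≤ ENNReal.ofReal (2 ^ (t / 2)) * bracketPow t η * bracketPow t (ξ - η) *
          bracketPow (-t) ξ * (p * (q * r)) := by gcongr
    _ = _ := by rw [← hshift η, ← hshift (ξ - η)]; ring

end Bracket

lemma ENNReal.lintegral_mul_le_L2_mul_L2 {α : Type*} [MeasurableSpace α] {μ : Measure α}
    {f g : α → ℝ≥0∞} (hf : AEMeasurable f μ) (hg : AEMeasurable g μ) :
    ∫⁻ x, f x * g x ∂μ ≤
      (∫⁻ x, f x ^ 2 ∂μ) ^ (1 / 2 : ℝ) * (∫⁻ x, g x ^ 2 ∂μ) ^ (1 / 2 : ℝ) := by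
  simpa [ENNReal.rpow_two] using
    ENNReal.lintegral_mul_le_Lp_mul_Lq μ Real.HolderConjugate.two_two hf hg

lemma ENNReal.rpow_half_mul_self (x : ℝ≥0∞) : x ^ (1 / 2 : ℝ) * x ^ (1 / 2 : ℝ) = x := by
  rw [← ENNReal.rpow_add_of_nonneg _ _ (by norm_num) (by norm_num)]
  norm_num

lemma ENNReal.rpow_half_sq (x : ℝ≥0∞) : (x ^ (1 / 2 : ℝ)) ^ 2 = x := by
  rw [sq, ENNReal.rpow_half_mul_self]

section ConvolutionBounds

variable {G : Type*} [MeasurableSpace G] [AddCommGroup G] [MeasurableAdd₂ G] [MeasurableNeg G]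
  {μ : Measure G}

lemma lintegral_mul_comp_sub_sq_le [μ.IsAddLeftInvariant] [μ.IsNegInvariant]
    {k : G → ℝ≥0∞} (hk : Measurable k) (ξ : G) :
    ∫⁻ η, (k η * k (ξ - η)) ^ 2 ∂μ ≤ ∫⁻ η, k η ^ 4 ∂μ := by
  have h4 (x : ℝ≥0∞) : (x ^ 2) ^ 2 = x ^ 4 := by ring
  calc ∫⁻ η, (k η * k (ξ - η)) ^ 2 ∂μ = ∫⁻ η, k η ^ 2 * k (ξ - η) ^ 2 ∂μ := by
        simp only [mul_pow]
    _ ≤ (∫⁻ η, (k η ^ 2) ^ 2 ∂μ) ^ (1 / 2 : ℝ) *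
          (∫⁻ η, (k (ξ - η) ^ 2) ^ 2 ∂μ) ^ (1 / 2 : ℝ) :=
        ENNReal.lintegral_mul_le_L2_mul_L2 (by fun_prop) (by fun_prop)
    _ = ∫⁻ η, k η ^ 4 ∂μ := by
        simp only [h4]
        rw [lintegral_sub_left_eq_self (fun η => k η ^ 4) ξ, ENNReal.rpow_half_mul_self]

lemma lintegral_lintegral_mul_comp_sub [SFinite μ] [μ.IsAddRightInvariant] {b c : G → ℝ≥0∞}
    (hb : Measurable b) (hc : Measurable c) :
    ∫⁻ ξ, ∫⁻ η, b η * c (ξ - η) ∂μ ∂μ = (∫⁻ η, b η ∂μ) * ∫⁻ ζ, c ζ ∂μ := by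
  rw [lintegral_lintegral_swap (by fun_prop), ← lintegral_mul_const _ hb]
  congr 1 with η
  rw [lintegral_const_mul _ (by fun_prop), lintegral_sub_right_eq_self c η]

theorem lintegral_mul_lintegral_mul_comp_sub_le [SFinite μ] [μ.IsAddLeftInvariant]
    [μ.IsNegInvariant] {a b c k : G → ℝ≥0∞} (ha : Measurable a) (hb : Measurable b)
    (hc : Measurable c) (hk : Measurable k) :
    ∫⁻ ξ, a ξ * ∫⁻ η, b η * c (ξ - η) * (k η * k (ξ - η)) ∂μ ∂μ ≤
      (∫⁻ η, k η ^ 4 ∂μ) ^ (1 / 2 : ℝ) * ((∫⁻ ξ, a ξ ^ 2 ∂μ) ^ (1 / 2 : ℝ) *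
        (∫⁻ η, b η ^ 2 ∂μ) ^ (1 / 2 : ℝ) * (∫⁻ ζ, c ζ ^ 2 ∂μ) ^ (1 / 2 : ℝ)) := by
  set M := ∫⁻ η, k η ^ 4 ∂μ
  set Φ : G → ℝ≥0∞ := fun ξ => ∫⁻ η, b η ^ 2 * c (ξ - η) ^ 2 ∂μ
  have hΦ : Measurable Φ :=
    Measurable.lintegral_prod_right (f := fun ξ η => b η ^ 2 * c (ξ - η) ^ 2) (by fun_prop)
  have inner (ξ : G) :
      ∫⁻ η, b η * c (ξ - η) * (k η * k (ξ - η)) ∂μ ≤ M ^ (1 / 2 : ℝ) * Φ ξ ^ (1 / 2 : ℝ) := by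
    calc ∫⁻ η, b η * c (ξ - η) * (k η * k (ξ - η)) ∂μ
        = ∫⁻ η, (k η * k (ξ - η)) * (b η * c (ξ - η)) ∂μ := by simp only [mul_comm]
      _ ≤ (∫⁻ η, (k η * k (ξ - η)) ^ 2 ∂μ) ^ (1 / 2 : ℝ) *
            (∫⁻ η, (b η * c (ξ - η)) ^ 2 ∂μ) ^ (1 / 2 : ℝ) :=
          ENNReal.lintegral_mul_le_L2_mul_L2 (by fun_prop) (by fun_prop)
      _ ≤ M ^ (1 / 2 : ℝ) * Φ ξ ^ (1 / 2 : ℝ) := by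
          simp only [Φ, mul_pow (b _)]
          gcongr
          exact lintegral_mul_comp_sub_sq_le hk ξ
  calc ∫⁻ ξ, a ξ * ∫⁻ η, b η * c (ξ - η) * (k η * k (ξ - η)) ∂μ ∂μ
      ≤ ∫⁻ ξ, M ^ (1 / 2 : ℝ) * (a ξ * Φ ξ ^ (1 / 2 : ℝ)) ∂μ := by
        refine lintegral_mono fun ξ => ?_
        rw [mul_left_comm]
        gcongr
        exact inner ξ
    _ = M ^ (1 / 2 : ℝ) * ∫⁻ ξ, a ξ * Φ ξ ^ (1 / 2 : ℝ) ∂μ := lintegral_const_mul _ (by fun_prop)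
    _ ≤ M ^ (1 / 2 : ℝ) * ((∫⁻ ξ, a ξ ^ 2 ∂μ) ^ (1 / 2 : ℝ) *
          (∫⁻ ξ, (Φ ξ ^ (1 / 2 : ℝ)) ^ 2 ∂μ) ^ (1 / 2 : ℝ)) := by
        gcongr
        exact ENNReal.lintegral_mul_le_L2_mul_L2 ha.aemeasurable (by fun_prop)
    _ = _ := by
        simp only [ENNReal.rpow_half_sq, Φ]
        rw [lintegral_lintegral_mul_comp_sub (b := (b · ^ 2)) (c := (c · ^ 2)) (by fun_prop)
            (by fun_prop), ENNReal.mul_rpow_of_nonneg _ _ (by norm_num), mul_assoc]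

end ConvolutionBounds

section Fourier

variable {V : Type*} [NormedAddCommGroup V] [InnerProductSpace ℝ V] [FiniteDimensional ℝ V]
  [MeasurableSpace V] [BorelSpace V]

theorem integral_mul_mul_eq_integral_fourier_mul_convolution (f g h : 𝓢(V, ℂ)) :
    ∫ x, f x * g x * h x = ∫ ξ, 𝓕 f ξ * ∫ η, 𝓕⁻ g η * 𝓕⁻ h (ξ - η) := by
  set B := ContinuousLinearMap.mul ℂ ℂ
  have hconv : 𝓕⁻ (pairing B g h) = SchwartzMap.convolution B (𝓕⁻ g) (𝓕⁻ h) := by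
    rw [← fourierInv_fourier_eq (F := 𝓢(V, ℂ)) (SchwartzMap.convolution B (𝓕⁻ g) (𝓕⁻ h)),
      fourier_convolution, fourier_fourierInv_eq, fourier_fourierInv_eq]
  calc ∫ x, f x * g x * h x = ∫ x, 𝓕⁻ (𝓕 f) x * pairing B g h x := by
        simp [B, mul_assoc]
    _ = ∫ ξ, 𝓕 f ξ * 𝓕⁻ (pairing B g h) ξ := integral_fourierInv_mul_eq _ _
    _ = _ := by simp [hconv, SchwartzMap.convolution_apply, MeasureTheory.convolution_def, B]

lemma lintegral_bracketPow_lt_top {σ : ℝ} (hσ : (finrank ℝ V : ℝ) < -σ) :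
    ∫⁻ ξ : V, bracketPow σ ξ < ∞ := by
  simpa [bracketPow] using (integrable_rpow_neg_one_add_norm_sq (μ := volume) hσ).lintegral_lt_top

lemma lintegral_bracketPow_pos (σ : ℝ) : 0 < ∫⁻ ξ : V, bracketPow σ ξ := by
  rw [lintegral_pos_iff_support (measurable_bracketPow σ)]
  have : Function.support (bracketPow σ : V → ℝ≥0∞) = Set.univ :=
    Set.eq_univ_of_forall fun ξ => by
      simpa [bracketPow] using Real.rpow_pos_of_pos (one_add_norm_sq_pos ξ) _
  simpa [this] using NeZero.ne volume

/-- `‖⟨ξ⟩ ^ σ u‖_{L²}`: the `H^σ` norm of a function whose Fourier transform is `u`. -/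
noncomputable def bracketL2 {F : Type*} [NormedAddCommGroup F] (σ : ℝ) (u : V → F) : ℝ≥0∞ :=
  (∫⁻ ξ, (bracketPow σ ξ * ‖u ξ‖ₑ) ^ 2) ^ (1 / 2 : ℝ)

lemma bracketL2_lt_top {F : Type*} [NormedAddCommGroup F] [NormedSpace ℝ F] (σ : ℝ)
    (u : 𝓢(V, F)) : bracketL2 σ u < ∞ := by
  have hw := Function.hasTemperateGrowth_one_add_norm_sq_rpow V (σ / 2)
  have h := ((smulLeftCLM F (fun ξ : V => (1 + ‖ξ‖ ^ 2) ^ (σ / 2)) u).memLp 2).eLpNorm_lt_top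
  rw [eLpNorm_eq_lintegral_rpow_enorm_toReal (by norm_num) (by norm_num)] at h
  simpa [bracketL2, smulLeftCLM_apply_apply hw, enorm_smul, bracketPow,
    Real.enorm_of_nonneg (Real.rpow_nonneg (one_add_norm_sq_pos _).le _)] using h

lemma bracketL2_fourierInv (σ : ℝ) (u : 𝓢(V, ℂ)) :
    bracketL2 σ (𝓕⁻ u : 𝓢(V, ℂ)) = bracketL2 σ (𝓕 u : 𝓢(V, ℂ)) := by
  rw [bracketL2, bracketL2, ← lintegral_neg_eq_self]
  simp [fourierInv_coe, Real.fourierInv_eq_fourier_neg, fourier_coe]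

theorem enorm_integral_mul_mul_le {t : ℝ} (ht : 0 ≤ t) (f g h : 𝓢(V, ℂ)) :
    ‖∫ x, f x * g x * h x‖ₑ ≤ ENNReal.ofReal (2 ^ (t / 2)) *
      (∫⁻ η : V, bracketPow (-1) η ^ 4) ^ (1 / 2 : ℝ) * (bracketL2 (-t) (𝓕 f : 𝓢(V, ℂ)) *
        bracketL2 (t + 1) (𝓕 g : 𝓢(V, ℂ)) * bracketL2 (t + 1) (𝓕 h : 𝓢(V, ℂ))) := by
  rw [integral_mul_mul_eq_integral_fourier_mul_convolution, ← bracketL2_fourierInv (t + 1) g,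
    ← bracketL2_fourierInv (t + 1) h, mul_assoc]
  calc ‖∫ ξ, 𝓕 f ξ * ∫ η, 𝓕⁻ g η * 𝓕⁻ h (ξ - η)‖ₑ
      ≤ ∫⁻ ξ, ‖𝓕 f ξ‖ₑ * ∫⁻ η, ‖𝓕⁻ g η‖ₑ * ‖𝓕⁻ h (ξ - η)‖ₑ := by
        refine (enorm_integral_le_lintegral_enorm _).trans (lintegral_mono fun ξ => ?_)
        rw [enorm_mul]
        gcongr
        exact (enorm_integral_le_lintegral_enorm _).trans_eq (by simp only [enorm_mul])
    _ = ∫⁻ ξ, ∫⁻ η, ‖𝓕 f ξ‖ₑ * (‖𝓕⁻ g η‖ₑ * ‖𝓕⁻ h (ξ - η)‖ₑ) := by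
        simp_rw [lintegral_const_mul' _ _ enorm_ne_top]
    _ ≤ ∫⁻ ξ, ∫⁻ η, ENNReal.ofReal (2 ^ (t / 2)) * (bracketPow (-t) ξ * ‖𝓕 f ξ‖ₑ *
          (bracketPow (t + 1) η * ‖𝓕⁻ g η‖ₑ * (bracketPow (t + 1) (ξ - η) * ‖𝓕⁻ h (ξ - η)‖ₑ) *
            (bracketPow (-1) η * bracketPow (-1) (ξ - η)))) :=
        lintegral_mono fun ξ => lintegral_mono fun η => mul_mul_le_bracketPow_weights ht ξ η _ _ _
    _ = ENNReal.ofReal (2 ^ (t / 2)) * ∫⁻ ξ, bracketPow (-t) ξ * ‖𝓕 f ξ‖ₑ *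
          ∫⁻ η, bracketPow (t + 1) η * ‖𝓕⁻ g η‖ₑ *
            (bracketPow (t + 1) (ξ - η) * ‖𝓕⁻ h (ξ - η)‖ₑ) *
              (bracketPow (-1) η * bracketPow (-1) (ξ - η)) := by
        simp_rw [lintegral_const_mul' _ _ ENNReal.ofReal_ne_top,
          lintegral_const_mul' _ _ (ENNReal.mul_ne_top (bracketPow_ne_top _ _) enorm_ne_top)]
    _ ≤ _ := by
        gcongr
        exact lintegral_mul_lintegral_mul_comp_sub_le (by fun_prop) (by fun_prop) (by fun_prop)
          (by fun_prop)

end Fourier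

local notation "E3" => EuclideanSpace ℝ (Fin 3)

lemma sobNorm_eq_toReal_bracketL2 (σ : ℝ) (u : 𝓢(E3, ℂ)) :
    sobNorm σ u = (bracketL2 σ (𝓕 u : 𝓢(E3, ℂ))).toReal := by
  rw [sobNorm, ← fourier_coe, bracketL2, ← ENNReal.toReal_rpow, integral_eq_lintegral_of_nonneg_ae
    (ae_of_all _ fun ξ => by positivity) (Measurable.aestronglyMeasurable (by fun_prop))]
  congr 2
  refine lintegral_congr fun ξ => ?_
  rw [mul_pow, bracketPow, ← ENNReal.ofReal_pow (by positivity), ← ofReal_norm,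
    ← ENNReal.ofReal_pow (norm_nonneg _), ← ENNReal.ofReal_mul (by positivity),
    Real.sqrt_eq_rpow, ← Real.rpow_mul (one_add_norm_sq_pos ξ).le,
    ← Real.rpow_mul_natCast (one_add_norm_sq_pos ξ).le]
  ring_nf

/-- Trilinear Sobolev estimate: |∫ fgh| ≲ ‖f‖_{H^{3/4-s}} ‖g‖_{H^{s+1/4}} ‖h‖_{H^{s+1/4}}. -/
theorem stmt_6 (s : ℝ) (hs : 3/4 < s) :
    ∃ C > 0, ∀ f g h : SchwartzMap (EuclideanSpace ℝ (Fin 3)) ℂ,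
      ‖∫ x : EuclideanSpace ℝ (Fin 3), f x * g x * h x‖
        ≤ C * sobNorm (3/4 - s) f * sobNorm (s + 1/4) g * sobNorm (s + 1/4) h := by
  obtain ⟨t, ht, rfl⟩ : ∃ t, 0 ≤ t ∧ s = t + 3 / 4 := ⟨s - 3 / 4, by linarith, by ring⟩
  have hM : ∫⁻ η : E3, bracketPow (-1) η ^ 4 = ∫⁻ η : E3, bracketPow (-4) η := by
    norm_num [bracketPow_pow]
  have hM_lt_top : ∫⁻ η : E3, bracketPow (-1) η ^ 4 < ∞ :=
    hM ▸ lintegral_bracketPow_lt_top (by norm_num)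
  have hM_pos : 0 < ∫⁻ η : E3, bracketPow (-1) η ^ 4 := hM ▸ lintegral_bracketPow_pos _
  refine ⟨2 ^ (t / 2) * ((∫⁻ η : E3, bracketPow (-1) η ^ 4) ^ (1 / 2 : ℝ)).toReal,
    mul_pos (by positivity) (ENNReal.toReal_pos (by positivity) (by finiteness)), fun f g h => ?_⟩
  rw [show 3 / 4 - (t + 3 / 4) = -t by ring, show t + 3 / 4 + 1 / 4 = t + 1 by ring,
    sobNorm_eq_toReal_bracketL2, sobNorm_eq_toReal_bracketL2, sobNorm_eq_toReal_bracketL2]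
  have hf := bracketL2_lt_top (-t) (𝓕 f : 𝓢(E3, ℂ))
  have hg := bracketL2_lt_top (t + 1) (𝓕 g : 𝓢(E3, ℂ))
  have hh := bracketL2_lt_top (t + 1) (𝓕 h : 𝓢(E3, ℂ))
  calc ‖∫ x, f x * g x * h x‖ = ‖∫ x, f x * g x * h x‖ₑ.toReal := (toReal_enorm _).symm
    _ ≤ _ := ENNReal.toReal_mono (by finiteness) (enorm_integral_mul_mul_le ht f g h)
    _ = _ := by
        rw [ENNReal.toReal_mul, ENNReal.toReal_mul, ENNReal.toReal_ofReal (by positivity)]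
        simp only [ENNReal.toReal_mul]
        ring
end
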